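/- For every continuous antisymmetric function g on the unit circle S¹, there exists a rotation R and a linear function ℓ on ℝ² such that g ∘ R agrees with ℓ on the six sixth roots of unity. -/

import Mathlib

/-!
Write `F a = g (unitVec a)`; antisymmetry makes `F` antiperiodic with antiperiod `π`. The
hexagon vectors `uₖ = unitVec (θ + k π / 3)` satisfy `u₂ = u₁ - u₀` and `uₖ₊₃ = -uₖ`, and `u₀`, `u₁`
are independent, so `F` agrees with a linear function on the hexagon as soon as the defect
`F θ - F (θ + π / 3) + F (θ + 2π / 3)` vanishes. The defect changes sign when `θ` moves by `π / 3`,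
so by the intermediate value theorem it vanishes for some `θ`.
-/

open RealInnerProductSpace Real

/-- The unit vector at angle `a` in the Euclidean plane. -/
noncomputable def unitVec (a : ℝ) : EuclideanSpace ℝ (Fin 2) := WithLp.toLp 2 ![Real.cos a, Real.sin a]

open Function

theorem Function.Antiperiodic.exists_eq_zero {α β : Type*} [AddZeroClass α] [TopologicalSpace α]
    [SeparatelyContinuousAdd α] [PreconnectedSpace α] [AddCommGroup β] [LinearOrder β]
    [IsOrderedAddMonoid β] [TopologicalSpace β] [OrderClosedTopology β] {f : α → β} {c : α}
    (hf : Continuous f) (hc : Antiperiodic f c) : ∃ x, f x = 0 := by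
  have hshift : Continuous fun x => f (x + c) := hf.comp (continuous_add_const c)
  have hcc : f (c + c) = f 0 := by rw [hc c, hc.eq, neg_neg]
  obtain ⟨x, hx⟩ : ∃ x, f x = f (x + c) := by
    rcases le_total (f 0) (f c) with h | h
    · exact intermediate_value_univ₂ hf hshift (a := 0) (b := c) (by rwa [zero_add])
        (by rwa [hcc])
    · obtain ⟨x, hx⟩ := intermediate_value_univ₂ hshift hf (a := 0) (b := c) (by rwa [zero_add])
        (by rwa [hcc])
      exact ⟨x, hx.symm⟩
  exact ⟨x, self_eq_neg.1 (hx.trans (hc x))⟩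

theorem exists_inner_eq_of_gram_ne_zero {E : Type*} [NormedAddCommGroup E] [InnerProductSpace ℝ E]
    {u v : E} (hgram : ⟪u, u⟫ * ⟪v, v⟫ - ⟪u, v⟫ ^ 2 ≠ 0) (a b : ℝ) :
    ∃ c : E, ⟪c, u⟫ = a ∧ ⟪c, v⟫ = b := by
  set D := ⟪u, u⟫ * ⟪v, v⟫ - ⟪u, v⟫ ^ 2
  refine ⟨((a * ⟪v, v⟫ - b * ⟪u, v⟫) / D) • u + ((b * ⟪u, u⟫ - a * ⟪u, v⟫) / D) • v, ?_, ?_⟩ <;>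
  · simp only [inner_add_left, real_inner_smul_left, real_inner_comm u v]
    field_simp
    ring

lemma inner_unitVec (a b : ℝ) : ⟪unitVec a, unitVec b⟫ = Real.cos (a - b) := by
  simp only [unitVec, PiLp.inner_apply, RCLike.inner_apply, ringHom_apply, Fin.sum_univ_two,
    Matrix.cons_val_zero, Matrix.cons_val_one, Matrix.cons_val_fin_one, cos_sub]
  ring

lemma norm_unitVec (a : ℝ) : ‖unitVec a‖ = 1 := by
  simp [EuclideanSpace.norm_eq, unitVec, Fin.sum_univ_two]

lemma continuous_unitVec : Continuous unitVec := by
  unfold unitVec; fun_prop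

lemma unitVec_add_pi (a : ℝ) : unitVec (a + π) = -unitVec a := by
  ext i
  fin_cases i <;> simp [unitVec, Real.cos_add, Real.sin_add]

lemma unitVec_add_two_pi_div_three (a : ℝ) :
    unitVec (a + 2 * π / 3) = unitVec (a + π / 3) - unitVec a := by
  have hcos : Real.cos (2 * π / 3) = -(1 / 2) := by
    rw [show 2 * π / 3 = π - π / 3 by ring, Real.cos_pi_sub, Real.cos_pi_div_three]
  have hsin : Real.sin (2 * π / 3) = Real.sin (π / 3) := by
    rw [show 2 * π / 3 = π - π / 3 by ring, Real.sin_pi_sub]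
  ext i
  fin_cases i <;>
  · simp only [unitVec, PiLp.sub_apply, cos_add, sin_add, hcos, hsin, cos_pi_div_three, Fin.zero_eta,
      Fin.mk_one, Matrix.cons_val_zero, Matrix.cons_val_one, Matrix.cons_val_fin_one]
    ring

lemma antiperiodic_inner_unitVec (c : EuclideanSpace ℝ (Fin 2)) :
    Antiperiodic (fun a => ⟪c, unitVec a⟫) π := fun a => by
  simp only [unitVec_add_pi, inner_neg_right]

lemma exists_inner_unitVec_eq (θ a b : ℝ) :
    ∃ c : EuclideanSpace ℝ (Fin 2), ⟪c, unitVec θ⟫ = a ∧ ⟪c, unitVec (θ + π / 3)⟫ = b := by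
  refine exists_inner_eq_of_gram_ne_zero ?_ a b
  simp only [inner_unitVec, sub_self, sub_add_cancel_left, Real.cos_zero, Real.cos_neg,
    Real.cos_pi_div_three]
  norm_num

noncomputable def hexagonDefect (F : ℝ → ℝ) (θ : ℝ) : ℝ :=
  F θ - F (θ + π / 3) + F (θ + 2 * π / 3)

lemma Continuous.hexagonDefect {F : ℝ → ℝ} (hF : Continuous F) : Continuous (hexagonDefect F) := by
  unfold _root_.hexagonDefect
  fun_prop

lemma Function.Antiperiodic.hexagonDefect {F : ℝ → ℝ} (hF : Antiperiodic F π) :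
    Antiperiodic (hexagonDefect F) (π / 3) := fun θ => by
  simp only [_root_.hexagonDefect]
  rw [show θ + π / 3 + π / 3 = θ + 2 * π / 3 by ring, show θ + π / 3 + 2 * π / 3 = θ + π by ring, hF]
  ring

lemma hexagonDefect_inner_unitVec (c : EuclideanSpace ℝ (Fin 2)) (θ : ℝ) :
    hexagonDefect (fun a => ⟪c, unitVec a⟫) θ = 0 := by
  simp only [hexagonDefect, unitVec_add_two_pi_div_three, inner_sub_right]
  ring

lemma eq_on_hexagon_of_hexagonDefect_eq_zero {F G : ℝ → ℝ} {θ : ℝ}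
    (hF : Antiperiodic F π) (hG : Antiperiodic G π)
    (hF0 : hexagonDefect F θ = 0) (hG0 : hexagonDefect G θ = 0)
    (h0 : F θ = G θ) (h1 : F (θ + π / 3) = G (θ + π / 3)) (k : Fin 6) :
    F (θ + k * (π / 3)) = G (θ + k * (π / 3)) := by
  have h2 : F (θ + 2 * π / 3) = G (θ + 2 * π / 3) := by
    unfold hexagonDefect at hF0 hG0
    linarith
  have h_add_pi (x : ℝ) : F (x + π) = G (x + π) ↔ F x = G x := by rw [hF, hG, neg_inj]
  obtain ⟨k, hk⟩ := k
  interval_cases k <;> simp only [Nat.cast_ofNat, Nat.cast_zero, Nat.cast_one]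
  · simpa using h0
  · simpa using h1
  · simpa [mul_div_assoc] using h2
  · rw [show θ + 3 * (π / 3) = θ + π by ring, h_add_pi]; exact h0
  · rw [show θ + 4 * (π / 3) = θ + π / 3 + π by ring, h_add_pi]; exact h1
  · rw [show θ + 5 * (π / 3) = θ + 2 * π / 3 + π by ring, h_add_pi]; exact h2

/-- For every continuous antisymmetric function `g` on the unit circle there is a
rotation (by an angle `θ`) and a linear function `⟪c, ·⟫` agreeing with `g` at the
rotated images of the six sixth roots of unity. -/
theorem antisymmetric_agrees_linear_on_hexagon
    (g : EuclideanSpace ℝ (Fin 2) → ℝ)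
    (hg : ContinuousOn g (Metric.sphere (0 : EuclideanSpace ℝ (Fin 2)) 1))
    (hanti : ∀ v : EuclideanSpace ℝ (Fin 2), ‖v‖ = 1 → g (-v) = -g v) :
    ∃ (θ : ℝ) (c : EuclideanSpace ℝ (Fin 2)),
      ∀ k : Fin 6, g (unitVec (θ + k * (π / 3))) = ⟪c, unitVec (θ + k * (π / 3))⟫ := by
  set F : ℝ → ℝ := fun a => g (unitVec a)
  have hF : Continuous F :=
    hg.comp_continuous continuous_unitVec fun a => by simp [norm_unitVec]
  have hF_anti : Antiperiodic F π := fun a => by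
    simp only [F, unitVec_add_pi]
    exact hanti _ (norm_unitVec a)
  obtain ⟨θ, hθ⟩ := hF_anti.hexagonDefect.exists_eq_zero hF.hexagonDefect
  obtain ⟨c, hc0, hc1⟩ := exists_inner_unitVec_eq θ (F θ) (F (θ + π / 3))
  exact ⟨θ, c, eq_on_hexagon_of_hexagonDefect_eq_zero hF_anti (antiperiodic_inner_unitVec c) hθ
    (hexagonDefect_inner_unitVec c θ) hc0.symm hc1.symm⟩
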